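/- arXiv:2210.14630 — 4 statements merged into one kernel-verified Lean document; each statement's English description precedes it below -/
import Mathlib

section
/- Let (A, ≤) be a linearly ordered abelian group and x, y strictly positive elements with m•x = n•y for positive integers m, n. Then for all positive integers k, min{m' ∈ ℤ | m'•x + kn•y ≥ 0} = -km, and hence the comparison index CI(x,y) equals m/n. -/
open Filter

/-! Multiplying `m • x = n • y` by `k` turns the condition `0 ≤ m' • x + (k * n) • y` into
`0 ≤ (m' + k * m) • x`, which holds exactly when `-(k * m) ≤ m'` because `x > 0`.
The quotients `k * m / (k * n)` are then constant, equal to `m / n`. -/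

theorem isLeast_setOf_nonneg_zsmul_add_zsmul {A : Type*} [AddCommGroup A] [PartialOrder A]
    [IsOrderedAddMonoid A] {x : A} (hx : 0 < x) (a : ℤ) :
    IsLeast {t : ℤ | 0 ≤ t • x + a • x} (-a) := by
  have hset : {t : ℤ | 0 ≤ t • x + a • x} = Set.Ici (-a) := by
    ext t
    rw [Set.mem_ofPred_eq, Set.mem_Ici, ← zsmul_le_zsmul_iff_left hx, neg_zsmul,
      neg_le_iff_add_nonneg]
  exact hset ▸ isLeast_Ici

theorem tendsto_natCast_mul_div_natCast_mul (a b : ℝ) :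
    Tendsto (fun k : ℕ => (k * a) / (k * b)) atTop (nhds (a / b)) := by
  refine tendsto_const_nhds.congr' ?_
  filter_upwards [eventually_ne_atTop 0] with k hk
  exact (mul_div_mul_left a b (Nat.cast_ne_zero.mpr hk)).symm

theorem stmt1_general {A : Type*} [AddCommGroup A] [LinearOrder A] [IsOrderedAddMonoid A] (x y : A)
    (hx : 0 < x) (m n : ℕ)
    (hmn : (m : ℤ) • x = (n : ℤ) • y) :
    (∀ k : ℕ, 0 < k →
      IsLeast {m' : ℤ | 0 ≤ m' • x + ((k * n : ℕ) : ℤ) • y} (-((k * m : ℕ) : ℤ))) ∧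
    Tendsto (fun k : ℕ => -((-((k * m : ℕ) : ℤ) : ℝ) / ((k * n : ℕ) : ℝ)))
      atTop (nhds ((m : ℝ) / (n : ℝ))) := by
  have hscaled (k : ℕ) : ((k * n : ℕ) : ℤ) • y = ((k * m : ℕ) : ℤ) • x := by
    push_cast
    rw [mul_smul, mul_smul, hmn]
  refine ⟨fun k _ => ?_, ?_⟩
  · simp_rw [hscaled k]
    exact isLeast_setOf_nonneg_zsmul_add_zsmul hx _
  · convert tendsto_natCast_mul_div_natCast_mul m n using 2
    push_cast
    ring

/-- If `m • x = n • y` for positive integers `m, n` and positive `x, y`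
in a linearly ordered abelian group, then for all positive `k`,
`min {m' : ℤ | 0 ≤ m' • x + (k*n) • y} = -(k*m)`, and hence
`CI(x,y) = lim -m(kn)/(kn) = m/n`. -/
theorem stmt1 {A : Type*} [AddCommGroup A] [LinearOrder A] [IsOrderedAddMonoid A] (x y : A)
    (hx : 0 < x) (hy : 0 < y) (m n : ℕ) (hm : 0 < m) (hn : 0 < n)
    (hmn : (m : ℤ) • x = (n : ℤ) • y) :
    (∀ k : ℕ, 0 < k →
      IsLeast {m' : ℤ | 0 ≤ m' • x + ((k * n : ℕ) : ℤ) • y} (-((k * m : ℕ) : ℤ))) ∧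
    Tendsto (fun k : ℕ => -((-((k * m : ℕ) : ℤ) : ℝ) / ((k * n : ℕ) : ℝ)))
      atTop (nhds ((m : ℝ) / (n : ℝ))) :=
  stmt1_general x y hx m n hmn
end

section
/- In the group ring ℤ[x, x⁻¹] of Laurent polynomials, suppose ≺ is a linear order making (ℤ[x,x⁻¹], +) an ordered abelian group which is invariant under multiplication by x, and suppose 1 ≻ 0 and x ≪ 1 (i.e., n•x ≺ 1 for all positive integers n, and more generally multiplication by x strictly decreases Archimedean class). Then a nonzero f(x) = Σ aᵢ xⁱ satisfies f ≻ 0 if and only if the coefficient a_k of its lowest-degree term is positive. -/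
/-!
Since ≺ is total, multiplication by `x⁻¹` preserves it as well as multiplication by `x`, so
multiplication by every power of `x` does. Shifting `x ≪ 1` then gives `c • x ^ a ≺ x ^ d` for
every `c ∈ ℤ` and every `d < a`, and peeling off lowest terms one at a time shows that any `q`
supported in degrees `> d` satisfies `q ≺ x ^ d`. So if `f = a x ^ k + q` with `q` supported
above `k` and `a ≥ 1`, then `-q ≺ x ^ k ≤ a x ^ k`, i.e. `0 ≺ f`; applied to `-f` this settles
`a ≤ -1`.
-/

open LaurentPolynomial

theorem rel_of_map_rel {α : Type*} {r : α → α → Prop} (φ : α → α)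
    (htotal : ∀ a b, r a b ∨ a = b ∨ r b a) (hirr : ∀ a, ¬ r a a)
    (htrans : ∀ a b c, r a b → r b c → r a c) (hφ : ∀ a b, r a b → r (φ a) (φ b))
    {a b : α} (h : r (φ a) (φ b)) : r a b := by
  rcases htotal a b with hab | rfl | hba
  · exact hab
  · exact absurd h (hirr _)
  · exact absurd (htrans _ _ _ h (hφ _ _ hba)) (hirr _)

theorem pos_add_of_pos {G : Type*} [AddMonoid G] {r : G → G → Prop} (hadd : ∀ f g h, r f g → r (f + h) (g + h))
    (htrans : ∀ f g h, r f g → r g h → r f h) {a b : G} (ha : r 0 a) (hb : r 0 b) :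
    r 0 (a + b) :=
  htrans _ _ _ hb (by simpa using hadd _ _ b ha)

theorem lt_zero_of_pos_neg {G : Type*} [AddGroup G] {r : G → G → Prop} (hadd : ∀ f g h, r f g → r (f + h) (g + h)) {a : G}
    (h : r 0 (-a)) : r a 0 := by
  simpa using hadd _ _ a h

namespace LaurentPolynomial

/-- `r f g` stands for `f ≺ g`: only the strict part of the order is recorded. -/
structure IsXInvariantOrder (r : ℤ[T;T⁻¹] → ℤ[T;T⁻¹] → Prop) : Prop where
  total : ∀ f g, r f g ∨ f = g ∨ r g f
  irrefl : ∀ f, ¬ r f f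
  trans : ∀ f g h, r f g → r g h → r f h
  add_right : ∀ f g h, r f g → r (f + h) (g + h)
  T_one_mul : ∀ f g, r f g → r (T 1 * f) (T 1 * g)

variable {r : ℤ[T;T⁻¹] → ℤ[T;T⁻¹] → Prop}

theorem C_mul_T_one_lt_one (hone : r 0 1)
    (hll : ∀ n : ℕ, 0 < n → r (n • T 1) 1 ∧ r (n • (-(T 1))) 1) (c : ℤ) : r (C c * T 1) 1 := by
  obtain ⟨n, rfl | rfl⟩ := c.eq_nat_or_neg
  · rcases n.eq_zero_or_pos with rfl | hn
    · simpa using hone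
    · simpa [nsmul_eq_mul] using (hll n hn).1
  · rcases n.eq_zero_or_pos with rfl | hn
    · simpa using hone
    · simpa [nsmul_eq_mul] using (hll n hn).2

namespace IsXInvariantOrder

variable (hr : IsXInvariantOrder r)
include hr

theorem T_mul (n : ℤ) {f g : ℤ[T;T⁻¹]} (h : r f g) : r (T n * f) (T n * g) := by
  induction n using Int.induction_on generalizing f g with
  | zero => simpa [T_zero] using h
  | succ i ih =>
    have h' := hr.T_one_mul _ _ (ih h)
    rwa [← mul_assoc, ← mul_assoc, ← T_add, add_comm] at h'
  | pred i ih =>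
    refine rel_of_map_rel (T 1 * ·) hr.total hr.irrefl hr.trans hr.T_one_mul ?_
    simpa [← mul_assoc, ← T_add] using ih h

theorem T_pos (hone : r 0 1) (d : ℤ) : r 0 (T d) := by
  simpa using hr.T_mul d hone

variable (hone : r 0 1) (hll : ∀ n : ℕ, 0 < n → r (n • T 1) 1 ∧ r (n • (-(T 1))) 1)
include hone hll

theorem C_mul_T_lt_one (c : ℤ) {e : ℤ} (he : 0 < e) : r (C c * T e) 1 := by
  induction e, he using Int.leInduction with
  | base => exact C_mul_T_one_lt_one hone hll c
  | succ e _ ih =>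
    have hT1 : r (T 1) 1 := by simpa using C_mul_T_one_lt_one hone hll 1
    have h := hr.T_one_mul _ _ ih
    rw [mul_one, mul_left_comm, ← T_add, add_comm] at h
    exact hr.trans _ _ _ h hT1

theorem C_mul_T_lt_T (c : ℤ) {a d : ℤ} (hda : d < a) : r (C c * T a) (T d) := by
  have h := hr.T_mul d (hr.C_mul_T_lt_one hone hll c (sub_pos.mpr hda))
  rwa [mul_one, mul_left_comm, ← T_add, add_sub_cancel] at h

theorem lt_T_of_forall_lt_of_mem_support {p : ℤ[T;T⁻¹]} {d : ℤ}
    (hd : ∀ e ∈ p.coeff.support, d < e) : r p (T d) := by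
  obtain ⟨q, rfl⟩ : ∃ q, AddMonoidAlgebra.ofCoeff q = p := ⟨p.coeff, rfl⟩
  induction q using Finsupp.induction_on_min generalizing d with
  | zero => exact hr.T_pos hone d
  | single_add a b q hq hb ih =>
    have hqa : q a = 0 := Finsupp.notMem_support_iff.mp fun ha => lt_irrefl a (hq a ha)
    have hda : d < a := hd a (by simp [hqa, hb])
    have hsplit : AddMonoidAlgebra.ofCoeff (Finsupp.single a b + q) = C b * T a + .ofCoeff q := by
      rw [AddMonoidAlgebra.ofCoeff_add, AddMonoidAlgebra.ofCoeff_single, single_eq_C_mul_T]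
    -- the tail is below `T a`, so the whole is below `(b + 1) • T a`, which is below `T d`
    have htail := hr.add_right _ _ (C b * T a) (ih hq)
    rw [hsplit, add_comm]
    refine hr.trans _ _ _ htail ?_
    simpa [add_mul, add_comm] using hr.C_mul_T_lt_T hone hll (b + 1) hda

theorem pos_of_lowest_coeff_pos {a k : ℤ} (ha : 0 < a) (q : ℤ[T;T⁻¹])
    (hq : ∀ e ∈ q.coeff.support, k < e) : r 0 (C a * T k + q) := by
  induction a, ha using Int.leInduction with
  | base =>
    have h := hr.lt_T_of_forall_lt_of_mem_support hone hll (p := -q) (by simpa using hq)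
    simpa [add_comm] using hr.add_right _ _ q h
  | succ a _ ih =>
    have h := pos_add_of_pos hr.add_right hr.trans (hr.T_pos hone k) ih
    rwa [← add_assoc, ← one_add_mul (C a) (T k), ← map_one C, ← map_add, add_comm 1] at h

theorem pos_iff_of_isLeast_support {f : ℤ[T;T⁻¹]} {k : ℤ} (hk : IsLeast ↑f.coeff.support k) :
    r 0 f ↔ 0 < f.coeff k := by
  have hsplit : f = C (f.coeff k) * T k + f.erase k := by
    conv_lhs => rw [← AddMonoidAlgebra.single_add_erase k f, single_eq_C_mul_T]
  have htail : ∀ e ∈ (f.erase k).coeff.support, k < e := by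
    intro e he
    rw [AddMonoidAlgebra.coeff_erase, Finsupp.support_erase, Finset.mem_erase] at he
    exact lt_of_le_of_ne (hk.2 he.2) (Ne.symm he.1)
  have hk0 : f.coeff k ≠ 0 := Finsupp.mem_support_iff.mp hk.1
  rcases hk0.lt_or_gt with hneg | hpos
  · refine iff_of_false (fun hf => hr.irrefl 0 (hr.trans _ _ _ hf ?_)) hneg.not_gt
    refine lt_zero_of_pos_neg hr.add_right ?_
    have h := hr.pos_of_lowest_coeff_pos hone hll (neg_pos.mpr hneg) (-f.erase k)
      (by simpa using htail)
    rwa [hsplit, neg_add, ← neg_mul, ← map_neg]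
  · have h := hr.pos_of_lowest_coeff_pos hone hll hpos _ htail
    exact iff_of_true (hsplit ▸ h) hpos

end IsXInvariantOrder

end LaurentPolynomial

/-- For an `⟨x⟩`-invariant order `≺` on the Laurent polynomials
`ℤ[T;T⁻¹]` with `1 ≻ 0` and `x ≪ 1`, a nonzero `f` is positive iff the coefficient
of its lowest-degree term is positive.  The strict order is given as a relation `r`
(where `r f g` means `f ≺ g`). -/
theorem stmt12 (r : LaurentPolynomial ℤ → LaurentPolynomial ℤ → Prop)
    (htotal : ∀ f g, r f g ∨ f = g ∨ r g f)
    (hirr : ∀ f, ¬ r f f)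
    (htrans : ∀ f g h, r f g → r g h → r f h)
    (hadd : ∀ f g h, r f g → r (f + h) (g + h))
    (hxinv : ∀ f g, r f g → r (T 1 * f) (T 1 * g))
    (hone : r 0 1)
    -- `x ≪ 1`: every positive integer multiple of `|x|` is below `1`
    (hll : ∀ n : ℕ, 0 < n → r (n • T 1) 1 ∧ r (n • (-(T 1))) 1) :
    ∀ f : LaurentPolynomial ℤ, ∀ hf : f ≠ 0,
      (r 0 f ↔ 0 < f.coeff (f.coeff.support.min'
        (Finsupp.support_nonempty_iff.mpr (fun h => hf (AddMonoidAlgebra.coeff_eq_zero.mp h))))) :=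
  fun _ _ => IsXInvariantOrder.pos_iff_of_isLeast_support ⟨htotal, hirr, htrans, hadd, hxinv⟩
    hone hll (Finset.isLeast_min' _ _)
end

section
/- Let r be a positive real number, and define P = {f ∈ ℤ[x,x⁻¹] | f(r) > 0} where f(r) denotes evaluation at r, together with, if r is algebraic, some compatible choice on {f | f(r)=0}. If r is transcendental, then P is the positive cone of an ⟨x⟩-invariant linear order on the additive group ℤ[x,x⁻¹]: P is closed under addition, under multiplication by x and x⁻¹, and ℤ[x,x⁻¹] = P ⊔ (-P) ⊔ {0}. -/
/-!
Evaluation at `r` is a ring homomorphism `ℤ[x,x⁻¹] → ℝ` sending `x` to the positive number `r`,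
so its positive set is closed under addition and under multiplication by `x^{±1}`. Every
nonzero Laurent polynomial is `x⁻ⁿ p` for an ordinary nonzero polynomial `p`, and `p(r) ≠ 0`
by transcendence, so evaluation at `r` is injective and trichotomy holds.
-/

open LaurentPolynomial

/-- Evaluation of an integer Laurent polynomial at a nonzero real number. -/
noncomputable def evalAt (r : ℝ) (f : LaurentPolynomial ℤ) : ℝ :=
  f.coeff.sum fun k a => (a : ℝ) * r ^ k

namespace LaurentPolynomial

theorem eval₂_injective_of_transcendental {R S : Type*} [CommRing R] [CommRing S] [Algebra R S]
    (x : Sˣ) (hx : Transcendental R (x : S)) : Function.Injective (eval₂ (algebraMap R S) x) := by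
  refine (injective_iff_map_eq_zero _).mpr fun f hf => ?_
  obtain ⟨n, p, hp⟩ := f.exists_T_pow
  have hp0 : p = 0 := by
    by_contra hp0
    refine hx ⟨p, hp0, ?_⟩
    rw [Polynomial.aeval_def, ← eval₂_toLaurent, hp, map_mul, hf, zero_mul]
  rwa [hp0, map_zero, eq_comm, (isUnit_T (n : ℤ)).mul_left_eq_zero] at hp

end LaurentPolynomial

section evalAt

variable {r : ℝ}

theorem evalAt_eq_eval₂ (hr : r ≠ 0) (f : LaurentPolynomial ℤ) :
    evalAt r f = eval₂ (algebraMap ℤ ℝ) (Units.mk0 r hr) f := by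
  induction f using LaurentPolynomial.induction_on' with
  | add p q hp hq =>
    rw [map_add, ← hp, ← hq]
    simp only [evalAt]
    exact Finsupp.sum_add_index' (by simp) fun _ _ _ => by push_cast; ring
  | C_mul_T n a =>
    rw [eval₂_C_mul_T, ← single_eq_C_mul_T, evalAt]
    simp [-single_eq_C_mul_T]

theorem evalAt_ne_zero (htr : Transcendental ℤ r) {f : LaurentPolynomial ℤ} (hf : f ≠ 0) :
    evalAt r f ≠ 0 := by
  have hr : r ≠ 0 := fun h => htr (h ▸ isAlgebraic_zero)
  rw [evalAt_eq_eval₂ hr, ← map_zero (eval₂ (algebraMap ℤ ℝ) (Units.mk0 r hr))]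
  exact (eval₂_injective_of_transcendental _ htr).ne hf

end evalAt

/-- For a transcendental `r > 0`, the set
`P = {f ∈ ℤ[x,x⁻¹] | f(r) > 0}` is the positive cone of an `⟨x⟩`-invariant linear
order on the additive group of Laurent polynomials: it is closed under addition,
under multiplication by `x` and `x⁻¹`, and `ℤ[x,x⁻¹] = P ⊔ (-P) ⊔ {0}`. -/
theorem stmt13 (r : ℝ) (hr : 0 < r) (htr : Transcendental ℤ r) :
    (∀ f ∈ {f : LaurentPolynomial ℤ | 0 < evalAt r f},
      ∀ g ∈ {f : LaurentPolynomial ℤ | 0 < evalAt r f},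
        f + g ∈ {f : LaurentPolynomial ℤ | 0 < evalAt r f}) ∧
    (∀ f ∈ {f : LaurentPolynomial ℤ | 0 < evalAt r f},
        T 1 * f ∈ {f : LaurentPolynomial ℤ | 0 < evalAt r f} ∧
        T (-1) * f ∈ {f : LaurentPolynomial ℤ | 0 < evalAt r f}) ∧
    (∀ f : LaurentPolynomial ℤ,
        f ∈ {f : LaurentPolynomial ℤ | 0 < evalAt r f} ∨
        -f ∈ {f : LaurentPolynomial ℤ | 0 < evalAt r f} ∨ f = 0) ∧
    (∀ f : LaurentPolynomial ℤ,
        ¬ (f ∈ {f : LaurentPolynomial ℤ | 0 < evalAt r f} ∧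
           -f ∈ {f : LaurentPolynomial ℤ | 0 < evalAt r f})) ∧
    (0 : LaurentPolynomial ℤ) ∉ {f : LaurentPolynomial ℤ | 0 < evalAt r f} := by
  simp only [Set.mem_ofPred_eq, evalAt_eq_eval₂ hr.ne', map_add, map_neg, map_mul, map_zero,
    eval₂_T, Units.val_zpow_eq_zpow_val, Units.val_mk0, neg_pos]
  refine ⟨fun f hf g hg => add_pos hf hg,
    fun f hf => ⟨mul_pos (zpow_pos hr _) hf, mul_pos (zpow_pos hr _) hf⟩, fun f => ?_,
    fun f ⟨hpos, hneg⟩ => hpos.not_gt hneg, lt_irrefl 0⟩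
  by_cases hf : f = 0
  · exact Or.inr (Or.inr hf)
  rw [← evalAt_eq_eval₂ hr.ne']
  exact (evalAt_ne_zero htr hf).lt_or_gt.symm.imp_right Or.inl
end

section
/- Let M be an abelian group on which a group Q acts by automorphisms, and suppose φ : M → ℝ is a group homomorphism such that for all m ∈ M with φ(m) ≠ 0 and all q ∈ Q, φ(q·m)·φ(m) > 0. Suppose further that ker φ admits a linear translation-invariant order ≤₀ preserved by the Q-action. Then M admits a linear translation-invariant order ≤ preserved by the Q-action such that every m with φ(m) > 0 is positive, namely: m > 0 iff φ(m) > 0, or (φ(m) = 0 and m >₀ 0). -/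
/-- Let `Q` act by automorphisms on an abelian group `M` and
`φ : M →+ ℝ` be such that the `Q`-action preserves the sign of `φ`.  If `ker φ`
carries a `Q`-invariant linear order (given here by its strict positive cone `P₀`),
then `M` carries a `Q`-invariant linear order whose positivity extends
`{m | 0 < φ m}`, namely with positive cone `{m | 0 < φ m ∨ (φ m = 0 ∧ m ∈ P₀)}`. -/
theorem stmt19 {M Q : Type*} [AddCommGroup M] [Group Q] [DistribMulAction Q M]
    (φ : M →+ ℝ)
    (hsign : ∀ m : M, φ m ≠ 0 → ∀ q : Q, 0 < φ (q • m) * φ m)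
    (P₀ : Set M)
    (hP₀ker : ∀ m ∈ P₀, φ m = 0)
    (hP₀add : ∀ a ∈ P₀, ∀ b ∈ P₀, a + b ∈ P₀)
    (hP₀Q : ∀ a ∈ P₀, ∀ q : Q, q • a ∈ P₀)
    (hP₀tri : ∀ m : M, φ m = 0 → m ∈ P₀ ∨ -m ∈ P₀ ∨ m = 0)
    (hP₀disj : ∀ m : M, ¬ (m ∈ P₀ ∧ -m ∈ P₀))
    (hP₀zero : (0 : M) ∉ P₀) :
    (∀ a ∈ {m : M | 0 < φ m ∨ (φ m = 0 ∧ m ∈ P₀)},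
       ∀ b ∈ {m : M | 0 < φ m ∨ (φ m = 0 ∧ m ∈ P₀)},
         a + b ∈ {m : M | 0 < φ m ∨ (φ m = 0 ∧ m ∈ P₀)}) ∧
    (∀ a ∈ {m : M | 0 < φ m ∨ (φ m = 0 ∧ m ∈ P₀)}, ∀ q : Q,
         q • a ∈ {m : M | 0 < φ m ∨ (φ m = 0 ∧ m ∈ P₀)}) ∧
    (∀ m : M, m ∈ {m : M | 0 < φ m ∨ (φ m = 0 ∧ m ∈ P₀)} ∨
        -m ∈ {m : M | 0 < φ m ∨ (φ m = 0 ∧ m ∈ P₀)} ∨ m = 0) ∧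
    (∀ m : M, ¬ (m ∈ {m : M | 0 < φ m ∨ (φ m = 0 ∧ m ∈ P₀)} ∧
        -m ∈ {m : M | 0 < φ m ∨ (φ m = 0 ∧ m ∈ P₀)})) ∧
    {m : M | 0 < φ m} ⊆ {m : M | 0 < φ m ∨ (φ m = 0 ∧ m ∈ P₀)} := by
  refine ⟨?_, ?_, ?_, ?_, ?_⟩
  · rintro a (ha | ⟨ha0, haP⟩) b (hb | ⟨hb0, hbP⟩) <;> simp only [Set.mem_setOf_eq, map_add]
    · left; linarith
    · left; linarith
    · left; linarith
    · right; exact ⟨by rw [ha0, hb0]; ring, hP₀add a haP b hbP⟩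
  · rintro a (ha | ⟨ha0, haP⟩) q <;> simp only [Set.mem_setOf_eq]
    · left
      have h := hsign a (ne_of_gt ha) q
      nlinarith
    · right
      have hq : φ (q • a) = 0 := by
        by_contra h
        have h2 := hsign (q • a) h q⁻¹
        rw [inv_smul_smul, ha0] at h2
        simp at h2
      exact ⟨hq, hP₀Q a haP q⟩
  · intro m
    rcases lt_trichotomy (φ m) 0 with h | h | h
    · right; left; left; rw [map_neg]; linarith
    · rcases hP₀tri m h with h1 | h1 | h1
      · left; right; exact ⟨h, h1⟩
      · right; left; right; constructor
        · rw [map_neg, h]; ring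
        · exact h1
      · right; right; exact h1
    · left; left; exact h
  · rintro m ⟨(h1 | ⟨h1, h1P⟩), (h2 | ⟨h2, h2P⟩)⟩ <;> rw [map_neg] at *
    · linarith
    · linarith
    · linarith
    · exact hP₀disj m ⟨h1P, h2P⟩
  · intro m hm; left; exact hm
end
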